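/- Fix a real number p with 1 ≤ p < ∞ and let X = ℓᵖ(ℕ; ℂ). Let w : ℕ → ℂ be a bounded sequence with w(n) ≠ 0 for every n ≥ 1, and let B_w : X → X be a continuous linear operator satisfying (B_w x)(n) = w(n+1)·x(n+1) for every x ∈ X and every n ∈ ℕ (the weighted backward shift with weight sequence w). If ∑_{n=1}^∞ 1/|w(1)·w(2)⋯w(n)|^{p/(p+1)} < ∞, then HC(B_w) is Haar-null: there exists a Borel probability measure ν on X such that ν(x + HC(B_w)) = 0 (outer measure) for every x ∈ X. -/

import Mathlib

open MeasureTheory Filter Topology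

noncomputable instance (p : ENNReal) [Fact (1 ≤ p)] :
    MeasurableSpace (lp (fun _ : ℕ => ℂ) p) := borel _

instance (p : ENNReal) [Fact (1 ≤ p)] : BorelSpace (lp (fun _ : ℕ => ℂ) p) := ⟨rfl⟩

/-- The set of hypercyclic vectors of a continuous linear operator. -/
def HypercyclicVectors {X : Type*} [NormedAddCommGroup X] [NormedSpace ℂ X]
    (T : X →L[ℂ] X) : Set X :=
  {x : X | Dense (Set.range fun n : ℕ => (T ^ n) x)}

/-- A Haar-null set in the sense of Christensen. -/
def IsHaarNull {X : Type*} [NormedAddCommGroup X] [NormedSpace ℂ X] [MeasurableSpace X]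
    (A : Set X) : Prop :=
  ∃ ν : Measure X, IsProbabilityMeasure ν ∧ ∀ x : X, ν ((fun a => x + a) '' A) = 0

/-!
Bayart–Matheron, Corollary 6.8. Write `W m = ‖w 1 ⋯ w m‖`, so that
`(B_w^m a) 0 = w 1 ⋯ w m · a m`. If `a` is hypercyclic, its orbit returns to the unit ball
infinitely often, hence `W m ‖a m‖ < 1` for infinitely many `m`. Let `ν` be the law of
`t • v` with `t` uniform on `[0, 1]` and `v m = W m ^ (-1/(p+1))`; the hypothesis says
exactly that `v ∈ ℓᵖ`. For fixed `x`, the `t` with `‖t v m - x m‖ < 1 / W m` form a set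
of length at most `2 / (W m v m) = 2 W m ^ (-p/(p+1))`, again summable, so by
Borel–Cantelli `ν`-almost no `y` satisfies `W m ‖y m - x m‖ < 1` infinitely often, whereas
every `y ∈ x + HC(B_w)` does.
-/

open scoped ENNReal

theorem DenseRange.frequently_mem {X : Type*} [TopologicalSpace X] [T1Space X]
    [∀ x : X, NeBot (𝓝[≠] x)] {u : ℕ → X} (hu : DenseRange u) {U : Set X} (hU : IsOpen U)
    (hne : U.Nonempty) : ∃ᶠ n in atTop, u n ∈ U := by
  refine frequently_atTop.2 fun N => ?_
  obtain ⟨_, ⟨⟨n, rfl⟩, hnN⟩, hnU⟩ :=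
    (hu.sdiff_finite ((Set.finite_Iio N).image u)).exists_mem_open hU hne
  exact ⟨n, not_lt.1 fun h => hnN ⟨n, h, rfl⟩, hnU⟩

theorem frequently_norm_pow_apply_lt_of_mem_hypercyclicVectors {X : Type*}
    [NormedAddCommGroup X] [NormedSpace ℂ X] [Nontrivial X] {T : X →L[ℂ] X} {x : X}
    (hx : x ∈ HypercyclicVectors T) {ε : ℝ} (hε : 0 < ε) :
    ∃ᶠ n in atTop, ‖(T ^ n) x‖ < ε :=
  have := Module.punctured_nhds_neBot ℂ X
  (DenseRange.frequently_mem hx Metric.isOpen_ball ⟨0, Metric.mem_ball_self hε⟩).mono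
    fun _ hn => mem_ball_zero_iff.1 hn

theorem Real.volume_setOf_norm_smul_sub_lt_le {z : ℂ} (hz : z ≠ 0) (c : ℂ) (r : ℝ) :
    volume {t : ℝ | ‖t • z - c‖ < r} ≤ ENNReal.ofReal (2 * (r / ‖z‖)) := by
  rw [← Real.volume_ball ((c / z).re)]
  refine measure_mono fun t ht => ?_
  have hz' : 0 < ‖z‖ := norm_pos_iff.2 hz
  have : ‖z‖ * ‖(t : ℂ) - c / z‖ = ‖t • z - c‖ := by
    rw [← norm_mul, mul_sub, mul_div_cancel₀ c hz, Complex.real_smul, mul_comm]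
  calc dist t (c / z).re = |((t : ℂ) - c / z).re| := by simp [Real.dist_eq]
    _ ≤ ‖(t : ℂ) - c / z‖ := Complex.abs_re_le_norm _
    _ < r / ‖z‖ := by rw [lt_div_iff₀ hz', mul_comm, this]; exact ht

section Segment

variable {E : Type*} [NormedAddCommGroup E] [NormedSpace ℝ E] [MeasurableSpace E]

noncomputable def segmentMeasure (v : E) : Measure E :=
  (volume.restrict (Set.Icc (0 : ℝ) 1)).map fun t : ℝ => t • v

instance [BorelSpace E] (v : E) : IsProbabilityMeasure (segmentMeasure v) :=
  have : IsProbabilityMeasure (volume.restrict (Set.Icc (0 : ℝ) 1)) := ⟨by simp⟩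
  Measure.isProbabilityMeasure_map (by fun_prop)

end Segment

section Sequences

variable {p : ℝ≥0∞} [Fact (1 ≤ p)]

instance : Nontrivial (lp (fun _ : ℕ => ℂ) p) :=
  ⟨lp.single p 0 (1 : ℂ), 0, fun h =>
    one_ne_zero (α := ℂ) (by simpa using congrFun (congrArg (⇑) h) 0)⟩

theorem segmentMeasure_setOf_frequently_eq_zero {v : lp (fun _ : ℕ => ℂ) p}
    (hv : ∀ m, v m ≠ 0) (x : lp (fun _ : ℕ => ℂ) p) {r : ℕ → ℝ}
    (hr : Summable fun m => r m / ‖v m‖) :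
    segmentMeasure v {y | ∃ᶠ m in atTop, ‖y m - x m‖ < r m} = 0 := by
  have hmeas :
      MeasurableSet {y : lp (fun _ : ℕ => ℂ) p | ∃ᶠ m in atTop, ‖y m - x m‖ < r m} := by
    have hslice (m : ℕ) : MeasurableSet {y : lp (fun _ : ℕ => ℂ) p | ‖y m - x m‖ < r m} :=
      (isOpen_lt (((lp.lipschitzWith_one_eval p m).continuous.sub continuous_const).norm)
        continuous_const).measurableSet
    convert MeasurableSet.measurableSet_limsup hslice using 1
    ext y
    simp only [Set.mem_ofPred_eq, mem_limsup_iff_frequently_mem]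
  rw [segmentMeasure, Measure.map_apply (by fun_prop) hmeas]
  refine measure_setOfPred_frequently_eq_zero <| ne_top_of_le_ne_top
    (ENNReal.tsum_coe_ne_top_iff_summable.2 (hr.mul_left 2).toNNReal) <|
    ENNReal.tsum_le_tsum fun m => ?_
  exact (Measure.restrict_le_self _).trans (Real.volume_setOf_norm_smul_sub_lt_le (hv m) _ _)

variable {w : ℕ → ℂ} {T : lp (fun _ : ℕ => ℂ) p →L[ℂ] lp (fun _ : ℕ => ℂ) p}

theorem weightedShift_pow_apply_zero (hT : ∀ x n, T x n = w (n + 1) * x (n + 1)) (m : ℕ)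
    (x : lp (fun _ : ℕ => ℂ) p) : (T ^ m) x 0 = (∏ k ∈ Finset.Icc 1 m, w k) * x m := by
  induction m generalizing x with
  | zero => simp
  | succ m ih =>
    rw [pow_succ, mul_apply_eq_comp, ih, hT, Finset.prod_Icc_succ_top (by omega)]
    ring

theorem frequently_norm_prod_mul_norm_lt_one_of_mem_hypercyclicVectors
    (hT : ∀ x n, T x n = w (n + 1) * x (n + 1)) {x : lp (fun _ : ℕ => ℂ) p}
    (hx : x ∈ HypercyclicVectors T) :
    ∃ᶠ m in atTop, ‖∏ k ∈ Finset.Icc 1 m, w k‖ * ‖x m‖ < 1 :=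
  (frequently_norm_pow_apply_lt_of_mem_hypercyclicVectors hx one_pos).mono fun m hm => by
    rw [← norm_mul, ← weightedShift_pow_apply_zero hT]
    exact (lp.norm_apply_le_norm (zero_lt_one.trans_le Fact.out).ne' _ 0).trans_lt hm

end Sequences

theorem Real.inv_rpow_one_div_add_one_rpow {x : ℝ} (hx : 0 ≤ x) (p : ℝ) :
    (x ^ (1 / (p + 1)))⁻¹ ^ p = 1 / x ^ (p / (p + 1)) := by
  rw [Real.inv_rpow (by positivity), ← Real.rpow_mul hx, one_div_mul_eq_div, one_div]

theorem Real.one_div_div_inv_rpow_one_div_add_one {x : ℝ} (hx : 0 < x) {p : ℝ}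
    (hp : p + 1 ≠ 0) :
    1 / x / (x ^ (1 / (p + 1)))⁻¹ = 1 / x ^ (p / (p + 1)) := by
  have : p / (p + 1) = 1 - 1 / (p + 1) := by field_simp; ring
  rw [this, Real.rpow_sub hx, Real.rpow_one]
  field_simp

theorem weightedShift_hypercyclicVectors_haarNull_general
    (p : ℝ) [Fact (1 ≤ ENNReal.ofReal p)]
    (w : ℕ → ℂ) (hw0 : ∀ n : ℕ, 1 ≤ n → w n ≠ 0)
    (T : lp (fun _ : ℕ => ℂ) (ENNReal.ofReal p) →L[ℂ] lp (fun _ : ℕ => ℂ) (ENNReal.ofReal p))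
    (hT : ∀ (x : lp (fun _ : ℕ => ℂ) (ENNReal.ofReal p)) (n : ℕ),
      (T x : ∀ _ : ℕ, ℂ) n = w (n + 1) * (x : ∀ _ : ℕ, ℂ) (n + 1))
    (hsum : Summable fun n : ℕ =>
      1 / (‖∏ k ∈ Finset.Icc 1 (n + 1), w k‖ ^ (p / (p + 1)))) :
    IsHaarNull (HypercyclicVectors T) := by
  have hp : 0 < p := by linarith [ENNReal.one_le_ofReal.1 (Fact.out : 1 ≤ ENNReal.ofReal p)]
  set W : ℕ → ℝ := fun m => ‖∏ k ∈ Finset.Icc 1 m, w k‖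
  have hW (m : ℕ) : 0 < W m :=
    norm_pos_iff.2 (Finset.prod_ne_zero_iff.2 fun k hk => hw0 k (Finset.mem_Icc.1 hk).1)
  have hsumW : Summable fun m => 1 / W m ^ (p / (p + 1)) := (summable_nat_add_iff 1).1 hsum
  have hv : Memℓp (fun m => (((W m ^ (1 / (p + 1)))⁻¹ : ℝ) : ℂ)) (ENNReal.ofReal p) :=
    memℓp_gen <| hsumW.congr fun m => by
      rw [ENNReal.toReal_ofReal hp.le, Complex.norm_real, Real.norm_of_nonneg (by positivity),
        Real.inv_rpow_one_div_add_one_rpow (hW m).le]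
  let v : lp (fun _ : ℕ => ℂ) (ENNReal.ofReal p) := ⟨_, hv⟩
  have hv0 (m : ℕ) : v m ≠ 0 :=
    Complex.ofReal_ne_zero.2 (inv_ne_zero (Real.rpow_pos_of_pos (hW m) _).ne')
  have hvsum : Summable fun m => 1 / W m / ‖v m‖ := hsumW.congr fun m => by
    rw [Complex.norm_real, Real.norm_of_nonneg (by positivity),
      Real.one_div_div_inv_rpow_one_div_add_one (hW m) (by positivity)]
  refine ⟨segmentMeasure v, inferInstance, fun x => measure_mono_null ?_
    (segmentMeasure_setOf_frequently_eq_zero hv0 x hvsum)⟩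
  rintro _ ⟨a, ha, rfl⟩
  refine (frequently_norm_prod_mul_norm_lt_one_of_mem_hypercyclicVectors hT ha).mono fun m hm => ?_
  dsimp only
  rwa [lp.coeFn_add, Pi.add_apply, add_sub_cancel_left, lt_div_iff₀ (hW m), mul_comm]

/-- **Bayart–Matheron, Corollary 6.8.** Let `B_w` be a weighted backward shift on
`ℓᵖ(ℕ)`, `1 ≤ p < ∞`, with bounded weight sequence `w`. If
`∑ 1/|w₁⋯w_n|^{p/(p+1)} < ∞`, then the set of hypercyclic vectors of `B_w` is Haar-null. -/
theorem weightedShift_hypercyclicVectors_haarNull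
    (p : ℝ) (hp : 1 ≤ p) [Fact (1 ≤ ENNReal.ofReal p)]
    (w : ℕ → ℂ) (hwbdd : ∃ C : ℝ, ∀ n, ‖w n‖ ≤ C) (hw0 : ∀ n : ℕ, 1 ≤ n → w n ≠ 0)
    (T : lp (fun _ : ℕ => ℂ) (ENNReal.ofReal p) →L[ℂ] lp (fun _ : ℕ => ℂ) (ENNReal.ofReal p))
    (hT : ∀ (x : lp (fun _ : ℕ => ℂ) (ENNReal.ofReal p)) (n : ℕ),
      (T x : ∀ _ : ℕ, ℂ) n = w (n + 1) * (x : ∀ _ : ℕ, ℂ) (n + 1))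
    (hsum : Summable fun n : ℕ =>
      1 / (‖∏ k ∈ Finset.Icc 1 (n + 1), w k‖ ^ (p / (p + 1)))) :
    IsHaarNull (HypercyclicVectors T) :=
  weightedShift_hypercyclicVectors_haarNull_general p w hw0 T hT hsum
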